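/- For a type-α 3-spiral representative P (i.e. for all i ≥ N: (Pᵢ,Pᵢ₊₁,Pᵢ₊₂) and (Pᵢ,Pᵢ₊₁,Pᵢ₊₄) positively oriented and Pᵢ₊₃ ∈ int(Pᵢ,Pᵢ₊₁,Pᵢ₊₄)), one has Pᵢ₊₃ ∈ int(Pᵢ, Pᵢ₊₁, Pᵢ₊₂) for all i > N. -/

import Mathlib

def det2 (u v : ℝ × ℝ) : ℝ := u.1 * v.2 - u.2 * v.1

def ori (A B C : ℝ × ℝ) : ℝ := det2 (B - A) (C - B)

def inTriangle (A B C W : ℝ × ℝ) : Prop :=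
  ∃ l₁ l₂ l₃ : ℝ, l₁ ∈ Set.Ioo (0:ℝ) 1 ∧ l₂ ∈ Set.Ioo (0:ℝ) 1 ∧
    l₃ ∈ Set.Ioo (0:ℝ) 1 ∧ l₁ + l₂ + l₃ = 1 ∧ W = l₁ • A + l₂ • B + l₃ • C

/-!
The point `P (i+3)` lies inside the triangle `P i, P (i+1), P (i+2)` exactly when it lies to the
left of each of its three oriented sides. For the side `P (i+1) P (i+2)` this is the hypothesis at
`i + 1`. For the side `P i P (i+1)` it follows from `P (i+3) ∈ int(P i, P (i+1), P (i+4))`, and for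
the side `P (i+2) P i` from `P (i+2) ∈ int(P (i-1), P i, P (i+3))`, the hypothesis at `i - 1`:
an interior point lies to the left of every side of a positively oriented triangle.
-/

section Orientation

variable (A B C W : ℝ × ℝ)

lemma ori_rotate : ori A B C = ori B C A := by
  simp only [ori, det2, Prod.fst_sub, Prod.snd_sub]
  ring

lemma ori_barycentric {l₁ l₂ l₃ : ℝ} (h : l₁ + l₂ + l₃ = 1) :
    ori A B (l₁ • A + l₂ • B + l₃ • C) = l₃ * ori A B C := by
  obtain rfl : l₁ = 1 - l₂ - l₃ := by linarith
  simp only [ori, det2, Prod.fst_add, Prod.snd_add, Prod.smul_fst, Prod.smul_snd,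
    Prod.fst_sub, Prod.snd_sub, smul_eq_mul]
  ring

lemma ori_add_ori_add_ori : ori B C W + ori C A W + ori A B W = ori A B C := by
  simp only [ori, det2, Prod.fst_sub, Prod.snd_sub]
  ring

/-- Cramer's rule: the barycentric coordinates of `W` are proportional to the orientations. -/
lemma ori_smul_add_ori_smul_add_ori_smul :
    ori B C W • A + ori C A W • B + ori A B W • C = ori A B C • W := by
  ext <;>
  · simp only [ori, det2, Prod.fst_add, Prod.snd_add, Prod.smul_fst, Prod.smul_snd,
      Prod.fst_sub, Prod.snd_sub, smul_eq_mul]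
    ring

variable {A B C W}

lemma ori_pos_of_inTriangle (hABC : 0 < ori A B C) (hW : inTriangle A B C W) :
    0 < ori A B W ∧ 0 < ori B C W ∧ 0 < ori C A W := by
  obtain ⟨l₁, l₂, l₃, hl₁, hl₂, hl₃, hsum, rfl⟩ := hW
  have hBCA : 0 < ori B C A := ori_rotate A B C ▸ hABC
  have hCAB : 0 < ori C A B := ori_rotate B C A ▸ hBCA
  refine ⟨?_, ?_, ?_⟩
  · rw [ori_barycentric _ _ _ hsum]
    exact mul_pos hl₃.1 hABC
  · rw [show l₁ • A + l₂ • B + l₃ • C = l₂ • B + l₃ • C + l₁ • A by abel,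
      ori_barycentric _ _ _ (by linarith)]
    exact mul_pos hl₁.1 hBCA
  · rw [show l₁ • A + l₂ • B + l₃ • C = l₃ • C + l₁ • A + l₂ • B by abel,
      ori_barycentric _ _ _ (by linarith)]
    exact mul_pos hl₂.1 hCAB

lemma inTriangle_of_ori_pos (hABC : 0 < ori A B C) (hAB : 0 < ori A B W)
    (hBC : 0 < ori B C W) (hCA : 0 < ori C A W) : inTriangle A B C W := by
  have hsum := ori_add_ori_add_ori A B C W
  have coord_lt_one {x : ℝ} (hx : 0 < x) (hle : x < ori A B C) : x / ori A B C ∈ Set.Ioo 0 1 :=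
    ⟨div_pos hx hABC, (div_lt_one hABC).2 hle⟩
  refine ⟨ori B C W / ori A B C, ori C A W / ori A B C, ori A B W / ori A B C,
    coord_lt_one hBC (by linarith), coord_lt_one hCA (by linarith), coord_lt_one hAB (by linarith),
    by rw [← add_div, ← add_div, hsum, div_self hABC.ne'], ?_⟩
  simp only [div_eq_inv_mul, mul_smul, ← smul_add, ori_smul_add_ori_smul_add_ori_smul,
    inv_smul_smul₀ hABC.ne']

theorem inTriangle_iff_ori_pos (hABC : 0 < ori A B C) :
    inTriangle A B C W ↔ 0 < ori A B W ∧ 0 < ori B C W ∧ 0 < ori C A W :=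
  ⟨ori_pos_of_inTriangle hABC, fun ⟨hAB, hBC, hCA⟩ => inTriangle_of_ori_pos hABC hAB hBC hCA⟩

end Orientation

theorem stmt11 (P : ℤ → ℝ × ℝ) (N : ℤ)
    (hspiral : ∀ i ≥ N, 0 < ori (P i) (P (i+1)) (P (i+2)) ∧
      0 < ori (P i) (P (i+1)) (P (i+4)) ∧
      inTriangle (P i) (P (i+1)) (P (i+4)) (P (i+3))) :
    ∀ i > N, inTriangle (P i) (P (i+1)) (P (i+2)) (P (i+3)) := by
  intro i hi
  obtain ⟨hori, hori₄, hin⟩ := hspiral i hi.le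
  obtain ⟨hnext, -, -⟩ := hspiral (i + 1) (by omega)
  obtain ⟨-, hprev₄, hprevIn⟩ := hspiral (i - 1) (by omega)
  rw [show i + 1 + 1 = i + 2 by ring, show i + 1 + 2 = i + 3 by ring] at hnext
  simp only [show i - 1 + 1 = i by ring, show i - 1 + 3 = i + 2 by ring,
    show i - 1 + 4 = i + 3 by ring] at hprev₄ hprevIn
  rw [inTriangle_iff_ori_pos hori, ori_rotate (P (i + 2))]
  exact ⟨(ori_pos_of_inTriangle hori₄ hin).1, hnext,
    (ori_pos_of_inTriangle hprev₄ hprevIn).2.1⟩
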